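/- arXiv:2401.06869 — 6 statements merged into one kernel-verified Lean document; each statement's English description precedes it below -/
import Mathlib

section
/- Let M be a matroid on a finite ordered set E and let S ⊆ E be such that S_e ∪ {e} is independent in M for all e ∈ E, where S_e = {s ∈ S : s > e}. Then the base polytope P(M) intersects the open region ⋂_{e∈E} H⁺_{e,S}, where H⁺_{e,S} = { v ∈ ℝ^E : Σ_{f ∈ S_e ∪ {e}} v_f > |S_e| }. Conversely, if this intersection is nonempty then S_e ∪ {e} is independent for all e. -/
open Matroid Set

/-- The indicator vector of a subset `B ⊆ E`, as a point of `ℝ^E`. -/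
noncomputable def indVec {α : Type*} (B : Set α) : α → ℝ := B.indicator 1

/-- The base polytope of a matroid: the convex hull of the indicator vectors of bases. -/
noncomputable def basePolytope {α : Type*} (M : Matroid α) : Set (α → ℝ) :=
  convexHull ℝ {x | ∃ B, M.IsBase B ∧ x = indVec B}

/-- The open half-space `H⁺_{e,S} = { v : Σ_{f ∈ S_e ∪ {e}} v_f > |S_e| }`,
where `S_e = {s ∈ S : s > e}`. -/
def halfSpace {α : Type*} [LinearOrder α] [DecidableEq α] (S : Finset α) (e : α) :
    Set (α → ℝ) :=
  {v | ((S.filter (fun s => e < s)).card : ℝ) < ∑ f ∈ insert e (S.filter (fun s => e < s)), v f}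

section aux
open Finset
variable {α : Type*} [Fintype α] [LinearOrder α] [DecidableEq α]


/-- position of `a`: number of elements `≤ a`. -/
def iot (a : α) : ℕ := (Finset.univ.filter (· ≤ a)).card

omit [DecidableEq α] in
lemma iot_strictMono : StrictMono (iot (α := α)) := by
  intro a b hab
  apply Finset.card_lt_card
  constructor
  · intro x hx; simp only [Finset.mem_filter, Finset.mem_univ, true_and] at *; exact hx.trans hab.le
  · intro h
    have := h (by simp : b ∈ Finset.univ.filter (· ≤ b))
    simp only [Finset.mem_filter, Finset.mem_univ, true_and] at this
    exact absurd this (not_le.2 hab)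

omit [DecidableEq α] in
lemma iot_le_card (a : α) : iot a ≤ Fintype.card α :=
  (Finset.card_filter_le _ _).trans (le_of_eq Finset.card_univ)

lemma card_filter_le_add (S : Finset α) {e a : α} (hea : e < a) :
    (S.filter (fun s => e < s)).card ≤ (S.filter (fun s => a < s)).card + (iot a - iot e) := by
  set A := S.filter (fun s => e < s) with hA
  set B := S.filter (fun s => a < s) with hB
  have hBA : B ⊆ A := by
    intro x hx; simp only [hA, hB, Finset.mem_filter] at *; exact ⟨hx.1, hea.trans hx.2⟩
  have h1 : (A \ B).card + B.card = A.card := Finset.card_sdiff_add_card_eq_card hBA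
  have h2 : A \ B ⊆ (Finset.univ.filter (· ≤ a)) \ (Finset.univ.filter (· ≤ e)) := by
    intro x hx
    simp only [hA, hB, Finset.mem_sdiff, Finset.mem_filter, Finset.mem_univ, true_and, not_and, not_lt] at *
    exact ⟨hx.2 hx.1.1, not_le.2 hx.1.2⟩
  have h3 : ((Finset.univ.filter (· ≤ a)) \ (Finset.univ.filter (· ≤ e))).card
      = iot a - iot e := by
    rw [Finset.card_sdiff_of_subset (by
      intro x hx; simp only [Finset.mem_filter, Finset.mem_univ, true_and] at *; exact hx.trans hea.le)]
    rfl
  have := Finset.card_le_card h2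
  omega

lemma mygeom_sum_eq (N : ℕ) :
    ∑ k ∈ Finset.range N, (1/4 : ℝ)^k * k = 4/9 - (1/4)^N * (4*N/3 + 4/9) := by
  induction N with
  | zero => simp
  | succ n ih => rw [Finset.sum_range_succ, ih]; push_cast; ring

lemma mygeom_sum_lt (N : ℕ) : ∑ k ∈ Finset.Icc 1 N, (1/4 : ℝ)^k * (k : ℝ) < 1 := by
  have hsub : Finset.Icc 1 N ⊆ Finset.range (N+1) := by
    intro k hk; simp only [Finset.mem_Icc] at hk; simp only [Finset.mem_range]; omega
  have h1 : ∑ k ∈ Finset.Icc 1 N, (1/4 : ℝ)^k * (k : ℝ)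
      ≤ ∑ k ∈ Finset.range (N+1), (1/4 : ℝ)^k * (k : ℝ) := by
    apply Finset.sum_le_sum_of_subset_of_nonneg hsub
    intro i _ _; positivity
  have h2 := mygeom_sum_eq (N+1)
  have h3 : (0:ℝ) ≤ (1/4:ℝ)^(N+1) * (4*((N:ℝ)+1)/3 + 4/9) := by positivity
  push_cast at h2 h3
  linarith

lemma key_weight (e : α) :
    ∑ a ∈ Finset.univ.filter (fun a => e < a),
      (1/4 : ℝ)^(iot a) * ((iot a - iot e : ℕ) : ℝ) < (1/4 : ℝ)^(iot e) := by
  set F := Finset.univ.filter (fun a => e < a) with hF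
  have hι : ∀ a ∈ F, iot e < iot a := by
    intro a ha; simp only [hF, Finset.mem_filter] at ha; exact iot_strictMono ha.2
  have hterm : ∀ a ∈ F, (1/4 : ℝ)^(iot a) * ((iot a - iot e : ℕ) : ℝ)
      = (1/4 : ℝ)^(iot e) * ((1/4 : ℝ)^(iot a - iot e) * ((iot a - iot e : ℕ) : ℝ)) := by
    intro a ha
    obtain ⟨d, hd⟩ : ∃ d, iot a = iot e + d := ⟨iot a - iot e, by have := hι a ha; omega⟩
    have hd' : iot a - iot e = d := by omega
    rw [hd', hd, pow_add]; ring
  rw [Finset.sum_congr rfl hterm, ← Finset.mul_sum]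
  have hinj : ∀ x ∈ F, ∀ y ∈ F, iot x - iot e = iot y - iot e → x = y := by
    intro x hx y hy h
    have hx' := hι x hx; have hy' := hι y hy
    exact iot_strictMono.injective (by omega)
  have himg : ∑ a ∈ F, (1/4 : ℝ)^(iot a - iot e) * ((iot a - iot e : ℕ) : ℝ)
      = ∑ k ∈ F.image (fun a => iot a - iot e), (1/4 : ℝ)^k * (k : ℝ) :=
    by rw [Finset.sum_image hinj]
  have hsub : F.image (fun a => iot a - iot e) ⊆ Finset.Icc 1 (Fintype.card α) := by
    intro k hk
    simp only [Finset.mem_image] at hk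
    obtain ⟨a, ha, rfl⟩ := hk
    have := hι a ha; have := iot_le_card a
    simp only [Finset.mem_Icc]; omega
  have hle : ∑ k ∈ F.image (fun a => iot a - iot e), (1/4 : ℝ)^k * (k : ℝ)
      ≤ ∑ k ∈ Finset.Icc 1 (Fintype.card α), (1/4 : ℝ)^k * (k : ℝ) := by
    apply Finset.sum_le_sum_of_subset_of_nonneg hsub
    intro i _ _; positivity
  calc (1/4 : ℝ)^(iot e) * ∑ a ∈ F, (1/4 : ℝ)^(iot a - iot e) * ((iot a - iot e : ℕ) : ℝ)
      < (1/4 : ℝ)^(iot e) * 1 := by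
        apply mul_lt_mul_of_pos_left _ (by positivity)
        rw [himg]; exact lt_of_le_of_lt hle (mygeom_sum_lt _)
    _ = (1/4 : ℝ)^(iot e) := mul_one _


lemma indVec_nonneg {B : Set α} (f : α) : 0 ≤ indVec B f := by
  classical
  simp only [indVec, Set.indicator_apply]
  split <;> norm_num

lemma indVec_le_one {B : Set α} (f : α) : indVec B f ≤ 1 := by
  classical
  simp only [indVec, Set.indicator_apply]
  split <;> norm_num

lemma sum_indVec_le {B : Set α} {T : Finset α} {m : ℕ} (hcard : T.card = m + 1)
    (hns : ¬ (↑T : Set α) ⊆ B) : ∑ f ∈ T, indVec B f ≤ (m : ℝ) := by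
  classical
  obtain ⟨f0, hf0T, hf0B⟩ := Set.not_subset.1 hns
  have hf0T' : f0 ∈ T := Finset.mem_coe.1 hf0T
  have h1 : ∑ f ∈ T, indVec B f = ∑ f ∈ T.erase f0, indVec B f := by
    rw [← Finset.sum_erase_add T _ hf0T']
    simp [indVec, Set.indicator_of_notMem hf0B]
  have h2 : ∑ f ∈ T.erase f0, indVec B f ≤ ((T.erase f0).card : ℝ) := by
    have := Finset.sum_le_card_nsmul (T.erase f0) (fun f => indVec B f) 1
      (fun f _ => indVec_le_one f)
    simpa using this
  have h3 : (T.erase f0).card = m := by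
    rw [Finset.card_erase_of_mem hf0T', hcard]; rfl
  rw [h1]
  rw [h3] at h2
  exact h2

lemma sum_indVec_ge {B : Set α} {T D : Finset α} (hDT : D ⊆ T) (hDB : (↑D : Set α) ⊆ B) :
    (D.card : ℝ) ≤ ∑ f ∈ T, indVec B f := by
  classical
  have h1 : ∑ f ∈ D, indVec B f = (D.card : ℝ) := by
    have hone : ∀ f ∈ D, indVec B f = 1 := fun f hf => by
      simp [indVec, Set.indicator_of_mem (hDB (Finset.mem_coe.2 hf))]
    rw [Finset.sum_congr rfl hone]
    simp
  rw [← h1]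
  exact Finset.sum_le_sum_of_subset_of_nonneg hDT (fun f _ _ => indVec_nonneg f)
end aux

/-- `S_e ∪ {e}` is independent for every `e ∈ E` if and only if the base polytope `P(M)`
meets the open region `⋂_{e ∈ E} H⁺_{e,S}`. -/
theorem stmt_2 {α : Type*} [Fintype α] [LinearOrder α] [DecidableEq α]
    (M : Matroid α) (hE : M.E = univ) (S : Finset α) :
    (∀ e : α, M.Indep (insert e ↑(S.filter (fun s => e < s)))) ↔
      (basePolytope M ∩ ⋂ e : α, halfSpace S e).Nonempty := by
  classical
  constructor
  · intro h
    cases isEmpty_or_nonempty α with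
    | inl hemp =>
      obtain ⟨B, hB⟩ := M.exists_isBase
      exact ⟨indVec B, subset_convexHull ℝ _ ⟨B, hB, rfl⟩,
        Set.mem_iInter.2 fun e => isEmptyElim e⟩
    | inr hne =>
      choose B hB hTB using fun e : α => (h e).exists_isBase_superset
      set μ : α → ℝ := fun a => (1/4 : ℝ)^(iot a) with hμ
      have hμpos : ∀ a, 0 < μ a := fun a => by simp only [hμ]; positivity
      have hμsum : 0 < ∑ a : α, μ a :=
        Finset.sum_pos (fun a _ => hμpos a) Finset.univ_nonempty
      refine ⟨Finset.univ.centerMass μ (fun a => indVec (B a)), ?_, ?_⟩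
      · exact Finset.centerMass_mem_convexHull _ (fun a _ => (hμpos a).le) hμsum
          (fun a _ => ⟨B a, hB a, rfl⟩)
      · refine Set.mem_iInter.2 fun e => ?_
        simp only [halfSpace, Set.mem_setOf_eq]
        set T := insert e (S.filter (fun s => e < s)) with hT
        set m := (S.filter (fun s => e < s)).card with hm
        have hv : ∀ f, Finset.univ.centerMass μ (fun a => indVec (B a)) f
            = (∑ a : α, μ a)⁻¹ * ∑ a : α, μ a * indVec (B a) f := by
          intro f
          rw [Finset.centerMass]
          simp [Finset.sum_apply, smul_eq_mul]
        have hswap : ∑ f ∈ T, Finset.univ.centerMass μ (fun a => indVec (B a)) f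
            = (∑ a : α, μ a)⁻¹ * ∑ a : α, μ a * (∑ f ∈ T, indVec (B a) f) := by
          simp_rw [hv, ← Finset.mul_sum]
          congr 1
          rw [Finset.sum_comm]
          exact Finset.sum_congr rfl fun a _ => (Finset.mul_sum _ _ _).symm
        rw [hswap]
        -- lower bounds for each a
        have hLB : ∀ a : α,
            μ a * (m : ℝ) + ((if a = e then μ e else 0)
              - (if e < a then μ a * ((iot a - iot e : ℕ) : ℝ) else 0))
            ≤ μ a * (∑ f ∈ T, indVec (B a) f) := by
          intro a
          rcases lt_trichotomy a e with hlt | heq | hgt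
          · rw [if_neg hlt.ne, if_neg (not_lt.2 hlt.le)]
            have hsub1 : (↑(S.filter (fun s => e < s)) : Set α) ⊆ B a := by
              refine Set.Subset.trans ?_ (hTB a)
              intro x hx
              simp only [Finset.coe_filter, Set.mem_setOf_eq] at hx
              simp only [Finset.coe_insert, Set.mem_insert_iff, Finset.coe_filter,
                Set.mem_setOf_eq]
              exact Or.inr ⟨hx.1, hlt.trans hx.2⟩
            have := sum_indVec_ge (Finset.subset_insert e _) hsub1
            have h' := mul_le_mul_of_nonneg_left this (hμpos a).le
            linarith
          · subst heq
            rw [if_pos rfl, if_neg (lt_irrefl a)]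
            have hsub1 : (↑T : Set α) ⊆ B a := by
              rw [hT, Finset.coe_insert]; exact hTB a
            have := sum_indVec_ge (Finset.Subset.refl T) hsub1
            have hTc : (T.card : ℝ) = (m : ℝ) + 1 := by
              rw [hT, Finset.card_insert_of_notMem (by simp)]
              push_cast
              ring
            rw [hTc] at this
            have h' := mul_le_mul_of_nonneg_left this (hμpos a).le
            nlinarith [(hμpos a).le]
          · rw [if_neg hgt.ne', if_pos hgt]
            set D := S.filter (fun s => a < s) with hD
            have hDT : D ⊆ T := by
              refine Finset.Subset.trans ?_ (Finset.subset_insert e _)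
              intro x hx
              simp only [hD, Finset.mem_filter] at hx ⊢
              exact ⟨hx.1, hgt.trans hx.2⟩
            have hDB : (↑D : Set α) ⊆ B a := by
              refine Set.Subset.trans ?_ (hTB a)
              intro x hx
              simp only [hD, Finset.coe_filter, Set.mem_setOf_eq] at hx
              simp only [Finset.coe_insert, Set.mem_insert_iff, Finset.coe_filter,
                Set.mem_setOf_eq]
              exact Or.inr hx
            have h1 := sum_indVec_ge hDT hDB
            have h2 : m ≤ D.card + (iot a - iot e) := card_filter_le_add S hgt
            have h3 : (m : ℝ) ≤ (D.card : ℝ) + ((iot a - iot e : ℕ) : ℝ) := by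
              exact_mod_cast h2
            have h4 : (m : ℝ) - ((iot a - iot e : ℕ) : ℝ) ≤ ∑ f ∈ T, indVec (B a) f := by
              linarith
            have h' := mul_le_mul_of_nonneg_left h4 (hμpos a).le
            nlinarith [(hμpos a).le]
        have hsum := Finset.sum_le_sum (fun a (_ : a ∈ Finset.univ) => hLB a)
        rw [Finset.sum_add_distrib, Finset.sum_sub_distrib] at hsum
        have he1 : ∑ a : α, (if a = e then μ e else 0) = μ e := by
          rw [Finset.sum_ite_eq' Finset.univ e (fun _ => μ e), if_pos (Finset.mem_univ e)]
        have he2 : ∑ a : α, (if e < a then μ a * ((iot a - iot e : ℕ) : ℝ) else 0)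
            = ∑ a ∈ Finset.univ.filter (fun a => e < a),
                μ a * ((iot a - iot e : ℕ) : ℝ) := by
          rw [Finset.sum_filter]
        rw [he1, he2] at hsum
        have hkey := key_weight e
        have hμm : ∑ a : α, μ a * (m : ℝ) = (m : ℝ) * ∑ a : α, μ a := by
          rw [← Finset.sum_mul]; ring
        rw [hμm] at hsum
        rw [inv_mul_eq_div, lt_div_iff₀ hμsum]
        have : (m : ℝ) * ∑ a : α, μ a < (m : ℝ) * (∑ a : α, μ a) + (μ e -
            ∑ a ∈ Finset.univ.filter (fun a => e < a), μ a * ((iot a - iot e : ℕ) : ℝ)) := by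
          have : ∑ a ∈ Finset.univ.filter (fun a => e < a),
              μ a * ((iot a - iot e : ℕ) : ℝ) < μ e := hkey
          linarith
        linarith
  · rintro ⟨v, hv, hH⟩ e
    by_contra hdep
    set T := insert e (S.filter (fun s => e < s)) with hT
    set m := (S.filter (fun s => e < s)).card with hm
    have hTcard : T.card = m + 1 := Finset.card_insert_of_notMem (by simp)
    have hlin : IsLinearMap ℝ (fun w : α → ℝ => ∑ f ∈ T, w f) :=
      ⟨fun x y => by simp [Finset.sum_add_distrib], fun c x => by simp [Finset.mul_sum]⟩
    have hsub : {x : α → ℝ | ∃ B, M.IsBase B ∧ x = indVec B}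
        ⊆ {w : α → ℝ | ∑ f ∈ T, w f ≤ (m : ℝ)} := by
      rintro x ⟨Bb, hBb, rfl⟩
      have hns : ¬ (↑T : Set α) ⊆ Bb := fun hss =>
        hdep (hBb.indep.subset (by rwa [hT, Finset.coe_insert] at hss))
      exact sum_indVec_le hTcard hns
    have hle : ∑ f ∈ T, v f ≤ (m : ℝ) :=
      convexHull_min hsub (convex_halfSpace_le hlin _) hv
    have hH' := Set.mem_iInter.1 hH e
    simp only [halfSpace, Set.mem_setOf_eq] at hH'
    rw [← hT, ← hm] at hH'
    linarith
end

section
/- Let E = E₁ ⊔ E₂ be a partition of a finite set and M a matroid on E. Let δ_{E₁} : ℝ^E → ℝ be the linear functional summing the coordinates indexed by E₁. Then the face of the base polytope P(M) on which δ_{E₁} attains its maximum equals P(M|_{E₁}) × P(M/E₁), the product of the base polytope of the restriction of M to E₁ and the base polytope of the contraction of M by E₁. -/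
open Matroid Set
open scoped Classical

/-- The set of points of `P` maximizing the functional `ψ`; if `ψ` is bounded above on the
polyhedron `P`, this is the face `P_ψ` of `P` on which `ψ` attains its maximum. -/
def maxFace {α : Type*} (P : Set (α → ℝ)) (ψ : (α → ℝ) → ℝ) : Set (α → ℝ) :=
  {x ∈ P | ∀ y ∈ P, ψ y ≤ ψ x}

/-- `B₂` is a base of the contraction `M / E₁` (a matroid on `E₁ᶜ`): it is disjoint from
`E₁` and together with some maximal independent subset `B₁` of `E₁` forms a base of `M`. -/
def ContractBase {α : Type*} (M : Matroid α) (E₁ : Set α) (B₂ : Set α) : Prop :=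
  Disjoint B₂ E₁ ∧ ∃ B₁, (M ↾ E₁).IsBase B₁ ∧ M.IsBase (B₁ ∪ B₂)

open scoped Pointwise

noncomputable def deltaLM {α : Type*} [Fintype α] (E₁ : Set α) : (α → ℝ) →ₗ[ℝ] ℝ where
  toFun := fun v => ∑ e : α, if e ∈ E₁ then v e else 0
  map_add' := fun v w => by
    rw [← Finset.sum_add_distrib]
    exact Finset.sum_congr rfl fun e _ => by by_cases h : e ∈ E₁ <;> simp [h]
  map_smul' := fun c v => by
    show (∑ e : α, if e ∈ E₁ then (c • v) e else 0) = c * ∑ e : α, if e ∈ E₁ then v e else 0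
    rw [Finset.mul_sum]
    exact Finset.sum_congr rfl fun e _ => by by_cases h : e ∈ E₁ <;> simp [h]

lemma indVec_union {α : Type*} {s t : Set α} (h : Disjoint s t) :
    indVec (s ∪ t) = indVec s + indVec t := by
  funext e
  simp only [indVec, Set.indicator_union_of_disjoint h, Pi.add_apply]

lemma deltaLM_indVec {α : Type*} [Fintype α] (E₁ B : Set α) :
    deltaLM E₁ (indVec B) = ((B ∩ E₁).ncard : ℝ) := by
  have h : ∀ e : α, (if e ∈ E₁ then indVec B e else 0) = (if e ∈ B ∩ E₁ then (1:ℝ) else 0) := by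
    intro e
    by_cases h1 : e ∈ E₁ <;> by_cases h2 : e ∈ B <;>
      simp [indVec, Set.indicator_apply, h1, h2]
  show (∑ e : α, if e ∈ E₁ then indVec B e else 0) = _
  rw [Finset.sum_congr rfl fun e _ => h e, Finset.sum_boole,
    Set.ncard_eq_toFinset_card (B ∩ E₁) (B ∩ E₁).toFinite]
  norm_cast
  congr 1
  ext e
  simp [Set.Finite.mem_toFinset]

lemma maxFace_convexHull {α : Type*} (ψ : (α → ℝ) →ₗ[ℝ] ℝ) {S : Set (α → ℝ)} (hS : S.Finite) :
    maxFace (convexHull ℝ S) ψ = convexHull ℝ {x ∈ S | ∀ y ∈ S, ψ y ≤ ψ x} := by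
  ext x
  constructor
  · rintro ⟨hx, hmax⟩
    have hce : (hS.toFinset : Set (α → ℝ)) = S := hS.coe_toFinset
    rw [← hce] at hx
    obtain ⟨w, hw0, hw1, hwx⟩ := Finset.mem_convexHull'.1 hx
    have hSne : hS.toFinset.Nonempty := by
      rcases Finset.eq_empty_or_nonempty hS.toFinset with h | h
      · rw [h] at hw1; simp at hw1
      · exact h
    set m := hS.toFinset.sup' hSne ψ with hm
    obtain ⟨z₀, hz₀T, hz₀⟩ := Finset.exists_mem_eq_sup' hSne (⇑ψ)
    have hub : ∀ y ∈ S, ψ y ≤ m := fun y hy => Finset.le_sup' (⇑ψ) (hS.mem_toFinset.2 hy)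
    have hxle : ψ x ≤ m := by
      have hsub : convexHull ℝ S ⊆ {y | ψ y ≤ m} :=
        convexHull_min hub (convex_halfSpace_le ψ.isLinear m)
      exact hsub (by rw [← hce]; exact hx)
    have hxm : ψ x = m := le_antisymm hxle
      (by rw [hm, hz₀]; exact hmax z₀ (subset_convexHull ℝ S (hS.mem_toFinset.1 hz₀T)))
    have hterm : ∀ y ∈ hS.toFinset, w y * (m - ψ y) = 0 := by
      refine (Finset.sum_eq_zero_iff_of_nonneg fun y hy =>
        mul_nonneg (hw0 y hy) (sub_nonneg.2 (hub y (hS.mem_toFinset.1 hy)))).1 ?_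
      have h1 : ∑ y ∈ hS.toFinset, w y * ψ y = m := by
        have h2 := congrArg ψ hwx
        rw [map_sum] at h2
        simp only [map_smul, smul_eq_mul] at h2
        rw [h2, hxm]
      calc ∑ y ∈ hS.toFinset, w y * (m - ψ y)
          = (∑ y ∈ hS.toFinset, w y) * m - ∑ y ∈ hS.toFinset, w y * ψ y := by
            rw [Finset.sum_mul, ← Finset.sum_sub_distrib]
            exact Finset.sum_congr rfl fun y _ => by ring
        _ = 0 := by rw [hw1, h1, one_mul, sub_self]
    have hw0' : ∀ y ∈ hS.toFinset, ψ y ≠ m → w y = 0 := by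
      intro y hy hne
      rcases mul_eq_zero.1 (hterm y hy) with h | h
      · exact h
      · exact absurd (by linarith [sub_eq_zero.1 h] : ψ y = m) hne
    set T' := hS.toFinset.filter (fun y => ψ y = m) with hT'
    have hxT' : x ∈ convexHull ℝ (T' : Set (α → ℝ)) := by
      refine Finset.mem_convexHull'.2 ⟨w, fun y hy => hw0 y (Finset.mem_of_mem_filter y hy), ?_, ?_⟩
      · rw [← hw1, hT']
        refine Finset.sum_subset (Finset.filter_subset _ _) ?_
        intro y hy hyn
        exact hw0' y hy (by simpa [hT', hy] using hyn)
      · rw [← hwx, hT']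
        refine Finset.sum_subset (Finset.filter_subset _ _) ?_
        intro y hy hyn
        rw [hw0' y hy (by simpa [hT', hy] using hyn), zero_smul]
    refine convexHull_mono ?_ hxT'
    intro z hz
    simp only [hT', Finset.coe_filter, Set.mem_setOf_eq, hS.mem_toFinset] at hz
    exact ⟨hz.1, fun y hy => hz.2 ▸ hub y hy⟩
  · intro hx
    have hne : {x ∈ S | ∀ y ∈ S, ψ y ≤ ψ x}.Nonempty :=
      convexHull_nonempty_iff.1 ⟨x, hx⟩
    obtain ⟨z, hzS, hzmax⟩ := hne
    have hψx : ψ x = ψ z := by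
      have hsub : convexHull ℝ {x ∈ S | ∀ y ∈ S, ψ y ≤ ψ x} ⊆ {w | ψ w = ψ z} := by
        refine convexHull_min ?_ (convex_hyperplane ψ.isLinear (ψ z))
        rintro u ⟨huS, humax⟩
        exact le_antisymm (hzmax u huS) (humax z hzS)
      exact hsub hx
    refine ⟨convexHull_mono (fun y hy => hy.1) hx, ?_⟩
    intro y hy
    have hsub : convexHull ℝ S ⊆ {w | ψ w ≤ ψ z} :=
      convexHull_min hzmax (convex_halfSpace_le ψ.isLinear (ψ z))
    rw [hψx]
    exact hsub hy

lemma union_base_of_basis {α : Type*} [Fintype α] {M : Matroid α} {E₁ B₁ B₁' B₂ : Set α}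
    (hB₁ : M.IsBasis B₁ E₁) (hB₁' : M.IsBasis B₁' E₁) (hB₂E : Disjoint B₂ E₁)
    (hB : M.IsBase (B₁' ∪ B₂)) : M.IsBase (B₁ ∪ B₂) := by
  have hsubE : B₁ ∪ B₂ ⊆ M.E :=
    union_subset (hB₁.indep.subset_ground) (hB.subset_ground.trans' subset_union_right)
  have hsp : M.Spanning (B₁ ∪ B₂) := by
    have h1 : B₁' ∪ B₂ ⊆ M.closure (B₁ ∪ B₂) := by
      refine union_subset ?_ ?_
      · exact (hB₁.subset_closure.trans' hB₁'.subset).trans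
          (M.closure_subset_closure subset_union_left)
      · exact (M.subset_closure (B₁ ∪ B₂) hsubE).trans' subset_union_right
    have h2 : M.closure (B₁' ∪ B₂) ⊆ M.closure (B₁ ∪ B₂) :=
      M.closure_subset_closure_of_subset_closure h1
    rw [hB.spanning.closure_eq] at h2
    exact ⟨(M.closure_subset_ground _).antisymm h2, hsubE⟩
  obtain ⟨B', hB', hB'sub⟩ := hsp.exists_isBase_subset
  have hd₁ : Disjoint B₁ B₂ := (hB₂E.symm.mono_left hB₁.subset)
  have hd₁' : Disjoint B₁' B₂ := (hB₂E.symm.mono_left hB₁'.subset)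
  have hcard : (B₁ ∪ B₂).encard = B'.encard := by
    rw [encard_union_eq hd₁, hB₁.encard_eq_encard hB₁', ← encard_union_eq hd₁',
      hB.encard_eq_encard_of_isBase hB']
  have heq : B' = B₁ ∪ B₂ := (Set.toFinite _).eq_of_subset_of_encard_le hB'sub hcard.le
  rwa [← heq]

theorem stmt_4' {α : Type*} [Fintype α] (M : Matroid α) (hE : M.E = univ) (E₁ : Set α) :
    maxFace (convexHull ℝ {x | ∃ B, M.IsBase B ∧ x = indVec B}) (deltaLM E₁) =
      {v | ∃ v₁ ∈ convexHull ℝ {x | ∃ B₁, (M ↾ E₁).IsBase B₁ ∧ x = indVec B₁},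
        ∃ v₂ ∈ convexHull ℝ {x | ∃ B₂, ContractBase M E₁ B₂ ∧ x = indVec B₂},
          v = v₁ + v₂} := by
  have hE₁ : E₁ ⊆ M.E := hE ▸ subset_univ E₁
  set S : Set (α → ℝ) := {x | ∃ B, M.IsBase B ∧ x = indVec B} with hSdef
  set S₁ : Set (α → ℝ) := {x | ∃ B₁, (M ↾ E₁).IsBase B₁ ∧ x = indVec B₁} with hS₁def
  set S₂ : Set (α → ℝ) := {x | ∃ B₂, ContractBase M E₁ B₂ ∧ x = indVec B₂} with hS₂def
  obtain ⟨I, hI⟩ := M.exists_isBasis E₁ hE₁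
  have hcard_eq : ∀ ⦃J⦄, M.IsBasis J E₁ → J.ncard = I.ncard := by
    intro J hJ
    have h := hJ.encard_eq_encard hI
    simp only [Set.ncard_def, h]
  have claim1 : ∀ ⦃B⦄, M.IsBase B → (B ∩ E₁).ncard ≤ I.ncard := by
    intro B hB
    obtain ⟨J, hJ, hBJ⟩ := (hB.indep.inter_right E₁).subset_isBasis_of_subset inter_subset_right hE₁
    exact (hcard_eq hJ) ▸ Set.ncard_le_ncard hBJ (Set.toFinite J)
  have claim3 : ∀ ⦃B⦄, M.IsBase B → (B ∩ E₁).ncard = I.ncard → M.IsBasis (B ∩ E₁) E₁ := by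
    intro B hB hcard
    obtain ⟨J, hJ, hBJ⟩ := (hB.indep.inter_right E₁).subset_isBasis_of_subset inter_subset_right hE₁
    have heq : B ∩ E₁ = J :=
      Set.eq_of_subset_of_ncard_le hBJ (by rw [hcard_eq hJ, hcard]) (Set.toFinite J)
    rwa [heq]
  obtain ⟨B₀, hB₀, hIB₀⟩ := hI.indep.exists_isBase_superset
  have hB₀I : B₀ ∩ E₁ = I :=
    (hI.eq_of_subset_indep (hB₀.indep.inter_right E₁)
      (subset_inter hIB₀ hI.subset) inter_subset_right).symm
  have hmaxeq : {x ∈ S | ∀ y ∈ S, deltaLM E₁ y ≤ deltaLM E₁ x} = S₁ + S₂ := by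
    ext x
    constructor
    · rintro ⟨⟨B, hB, rfl⟩, hmax⟩
      have hcard : (B ∩ E₁).ncard = I.ncard := by
        refine le_antisymm (claim1 hB) ?_
        have h := hmax (indVec B₀) ⟨B₀, hB₀, rfl⟩
        rw [deltaLM_indVec, deltaLM_indVec, hB₀I] at h
        exact_mod_cast h
      have hbasis := claim3 hB hcard
      have hdisj2 : Disjoint (B ∩ E₁) (B \ E₁) :=
        Set.disjoint_left.2 fun a ha ha' => ha'.2 ha.2
      rw [Set.mem_add]
      refine ⟨indVec (B ∩ E₁), ⟨B ∩ E₁, (isBase_restrict_iff hE₁).2 hbasis, rfl⟩,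
        indVec (B \ E₁), ⟨B \ E₁, ⟨disjoint_sdiff_left,
          B ∩ E₁, (isBase_restrict_iff hE₁).2 hbasis, by rwa [inter_union_diff]⟩, rfl⟩, ?_⟩
      rw [← indVec_union hdisj2, inter_union_diff]
    · intro hx
      rw [Set.mem_add] at hx
      obtain ⟨x₁, ⟨B₁, hB₁, rfl⟩, x₂, ⟨B₂, ⟨hdisj, B₁', hB₁', hBB⟩, rfl⟩, rfl⟩ := hx
      rw [isBase_restrict_iff hE₁] at hB₁ hB₁'
      have hBase : M.IsBase (B₁ ∪ B₂) := union_base_of_basis hB₁ hB₁' hdisj hBB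
      have hd : Disjoint B₁ B₂ := hdisj.symm.mono_left hB₁.subset
      have hint : (B₁ ∪ B₂) ∩ E₁ = B₁ := by
        rw [union_inter_distrib_right, inter_eq_self_of_subset_left hB₁.subset,
          hdisj.inter_eq, union_empty]
      refine ⟨⟨B₁ ∪ B₂, hBase, (indVec_union hd).symm⟩, ?_⟩
      rintro y ⟨B', hB', rfl⟩
      rw [deltaLM_indVec, ← indVec_union hd, deltaLM_indVec, hint,
        hcard_eq hB₁]
      exact_mod_cast claim1 hB'
  have hSfin : S.Finite := by
    have himg : S ⊆ indVec '' (univ : Set (Set α)) := by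
      rintro x ⟨B, _, rfl⟩
      exact ⟨B, trivial, rfl⟩
    exact (Set.finite_univ.image _).subset himg
  rw [maxFace_convexHull (deltaLM E₁) hSfin, hmaxeq, convexHull_add]
  ext v
  rw [Set.mem_add]
  constructor
  · rintro ⟨a, ha, b, hb, hab⟩
    exact ⟨a, ha, b, hb, hab.symm⟩
  · rintro ⟨a, ha, b, hb, hab⟩
    exact ⟨a, ha, b, hb, hab.symm⟩


/-- The face of `P(M)` maximizing `δ_{E₁}` equals `P(M|_{E₁}) × P(M/E₁)`: under the
identification `ℝ^E ≅ ℝ^{E₁} × ℝ^{E₂}` (with `E₂ = E₁ᶜ`), a point lies on the maximizing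
face iff it is the sum of a point of the base polytope of the restriction `M|_{E₁}`
(supported on `E₁`) and a point of the base polytope of the contraction `M/E₁`
(supported on `E₂`). -/
theorem stmt_4 {α : Type*} [Fintype α] (M : Matroid α) (hE : M.E = univ) (E₁ : Set α) :
    maxFace (basePolytope M) (fun v => ∑ e : α, if e ∈ E₁ then v e else 0) =
      {v | ∃ v₁ ∈ convexHull ℝ {x | ∃ B₁, (M ↾ E₁).IsBase B₁ ∧ x = indVec B₁},
        ∃ v₂ ∈ convexHull ℝ {x | ∃ B₂, ContractBase M E₁ B₂ ∧ x = indVec B₂},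
          v = v₁ + v₂} := by
  exact stmt_4' M hE E₁
end

section
/- Let M and M' be matroids on the same ground set E with the same rank, such that every basis of M' is a basis of M (a rank-preserving weak map). Then for every flat F' of M' there exists a flat F of M with rk_M(F) = rk_{M'}(F') and whose closure in M' equals F'. -/
open Matroid Set

/-- The rank of a set `S` in a matroid `M`: the maximal size of an independent subset. -/
noncomputable def matRank {α : Type*} (M : Matroid α) (S : Set α) : ℕ :=
  sSup {n | ∃ I, M.Indep I ∧ I ⊆ S ∧ I.ncard = n}

lemma flat_closure' {α : Type*} (M : Matroid α) (X : Set α) : M.IsFlat (M.closure X) := by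
  rw [closure_def, sInter_eq_iInter]
  have hne : Nonempty {F // F ∈ {F | M.IsFlat F ∧ X ∩ M.E ⊆ F}} :=
    ⟨⟨M.E, M.ground_isFlat, inter_subset_right⟩⟩
  exact IsFlat.iInter (fun F ↦ F.2.1)

lemma matRank_eq_of_basis {α : Type*} [Fintype α] {M : Matroid α} {I S : Set α}
    (hb : M.IsBasis I S) : matRank M S = I.ncard := by
  have hne : ({n | ∃ I, M.Indep I ∧ I ⊆ S ∧ I.ncard = n} : Set ℕ).Nonempty :=
    ⟨0, ⟨∅, M.empty_indep, empty_subset _, ncard_empty _⟩⟩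
  apply le_antisymm
  · apply csSup_le hne
    rintro n ⟨J, hJ, hJS, rfl⟩
    obtain ⟨J', hJ', hJJ'⟩ := hJ.subset_isBasis_of_subset hJS hb.subset_ground
    have h1 : J.ncard ≤ J'.ncard := ncard_le_ncard hJJ' (toFinite J')
    have h2 : J'.encard = I.encard := hJ'.encard_eq_encard hb
    have h3 : J'.ncard = I.ncard := by
      rw [Set.ncard_def, h2, ← Set.ncard_def]
    omega
  · exact le_csSup ⟨(univ : Set α).ncard, by
      rintro n ⟨J, hJ, hJS, rfl⟩
      exact Set.ncard_le_ncard (subset_univ J) (toFinite _)⟩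
      ⟨I, hb.indep, hb.subset, rfl⟩

/-- Rank-preserving weak maps lift flats: if every basis of `M'` is a basis of `M` and
`rk M = rk M'`, then every flat `F'` of `M'` is the `M'`-closure of some flat `F` of `M`
with `rk_M(F) = rk_{M'}(F')`. -/
theorem stmt_6 {α : Type*} [Fintype α] (M M' : Matroid α)
    (hME : M.E = univ) (hM'E : M'.E = univ)
    (hrk : matRank M univ = matRank M' univ)
    (hweak : ∀ B, M'.IsBase B → M.IsBase B)
    (F' : Set α) (hF' : M'.IsFlat F') :
    ∃ F, M.IsFlat F ∧ matRank M F = matRank M' F' ∧ M'.closure F = F' := by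
  obtain ⟨I, hI⟩ := M'.exists_isBasis F' (by rw [hM'E]; exact subset_univ _)
  -- I is M-independent
  have hMindep : ∀ J, M'.Indep J → M.Indep J := by
    intro J hJ
    obtain ⟨B, hB, hJB⟩ := hJ.exists_isBase_superset
    exact (hweak B hB).indep.subset hJB
  have hMI : M.Indep I := hMindep I hI.indep
  refine ⟨M.closure I, flat_closure' M I, ?_, ?_⟩
  · rw [matRank_eq_of_basis hMI.isBasis_closure, matRank_eq_of_basis hI]
  · -- M.closure I ⊆ M'.closure I = F'
    have hclI : M'.closure I = F' := by
      rw [hI.closure_eq_closure, hF'.closure]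
    have hsub : M.closure I ⊆ M'.closure I := by
      intro x hx
      by_contra hxc
      have hxI : x ∉ I := fun h => hxc (M'.subset_closure I hI.indep.subset_ground h)
      have hins : M'.Indep (insert x I) := by
        rw [hI.indep.insert_indep_iff]
        exact Or.inl ⟨by rw [hM'E]; exact mem_univ x, hxc⟩
      have hinsM : M.Indep (insert x I) := hMindep _ hins
      rw [hMI.mem_closure_iff] at hx
      rcases hx with h | h
      · exact h.not_indep hinsM
      · exact hxI h
    rw [hclI] at hsub
    apply le_antisymm
    · rw [← hF'.closure]
      exact M'.closure_subset_closure hsub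
    · rw [← hclI]
      exact M'.closure_subset_closure (M.subset_closure I (by rw [hME]; exact subset_univ _))
end

section
/- For a matroid M on a nonempty finite ground set E, the alternating sum over i of (-1)^i times the dimension of the degree-i component of the Orlik–Solomon algebra OS(M) equals zero; equivalently, the Poincaré polynomial π_M(t) = Σ_i t^i dim OS^i(M) vanishes at t = -1. -/
open Matroid Set
open scoped Classical

/-- `C` is a circuit of `M`: a minimal dependent subset of the ground set. -/
def IsCircuit {α : Type*} (M : Matroid α) (C : Set α) : Prop :=
  C ⊆ M.E ∧ ¬ M.Indep C ∧ ∀ D, D ⊂ C → M.Indep D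

/-- `B` is a broken circuit of `M` w.r.t. a fixed linear order: a circuit minus its least
element. -/
def IsBrokenCircuit {α : Type*} [LinearOrder α] (M : Matroid α) (B : Set α) : Prop :=
  ∃ e, (∀ f ∈ B, e < f) ∧ _root_.IsCircuit M (insert e B)

/-- `S` contains no broken circuit of `M`. -/
def NoBrokenCircuit {α : Type*} [LinearOrder α] (M : Matroid α) (S : Set α) : Prop :=
  ∀ B ⊆ S, ¬ IsBrokenCircuit M B

/-- Inserting the global minimum element preserves the no-broken-circuit property. -/
lemma nbc_insert_bot {α : Type*} [LinearOrder α] (M : Matroid α) (e₀ : α)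
    (h₀ : ∀ a : α, e₀ ≤ a) (S : Set α) :
    NoBrokenCircuit M (insert e₀ S) ↔ NoBrokenCircuit M S := by
  constructor
  · intro h B hBS hB
    exact h B (hBS.trans (Set.subset_insert _ _)) hB
  · intro h B hBS hB
    obtain ⟨e, he, hc⟩ := hB
    have he₀ : e₀ ∉ B := fun hmem => absurd (he e₀ hmem) (not_lt.2 (h₀ e))
    have : B ⊆ S := fun x hx => by
      rcases hBS hx with h1 | h2
      · exact absurd (h1 ▸ hx) he₀
      · exact h2
    exact h B this ⟨e, he, hc⟩

/-- The Poincaré polynomial of the Orlik–Solomon algebra vanishes at `t = -1`: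
since `dim OS^i(M) = #{S ∈ nbc(M) : |S| = i}`, this says
`Σ_{S ∈ nbc(M)} (-1)^{|S|} = 0` for any matroid on a nonempty finite ground set. -/
theorem stmt_8 {α : Type*} [Fintype α] [LinearOrder α] [Nonempty α]
    (M : Matroid α) (hE : M.E = univ) :
    ∑ S : Finset α, (if NoBrokenCircuit M ↑S then ((-1 : ℤ) ^ S.card) else 0) = 0 := by
  classical
  set e₀ : α := (Finset.univ : Finset α).min' Finset.univ_nonempty with he₀
  have h₀ : ∀ a : α, e₀ ≤ a := fun a => Finset.min'_le _ _ (Finset.mem_univ a)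
  set f : Finset α → ℤ := fun S => if NoBrokenCircuit M ↑S then ((-1 : ℤ) ^ S.card) else 0
  set g : Finset α → Finset α := fun S => if e₀ ∈ S then S.erase e₀ else insert e₀ S with hg
  have key : ∀ S : Finset α, f S + f (g S) = 0 := by
    intro S
    by_cases hmem : e₀ ∈ S
    · have hgS : g S = S.erase e₀ := by simp [hg, hmem]
      have hins : (insert e₀ ((S.erase e₀ : Finset α) : Set α)) = (S : Set α) := by
        rw [Finset.coe_erase, Set.insert_diff_singleton,
          Set.insert_eq_self.2 (by exact_mod_cast hmem)]
      have hiff : NoBrokenCircuit M ↑S ↔ NoBrokenCircuit M ↑(S.erase e₀) := by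
        rw [← hins]; exact nbc_insert_bot M e₀ h₀ _
      have hcard : S.card = (S.erase e₀).card + 1 := by
        rw [Finset.card_erase_of_mem hmem]
        have := Finset.card_pos.2 ⟨e₀, hmem⟩
        omega
      by_cases hn : NoBrokenCircuit M ↑S
      · simp only [f, hgS, if_pos hn, if_pos (hiff.mp hn), hcard, pow_succ]
        ring
      · simp only [f, hgS, if_neg hn, if_neg (hiff.not.mp hn), add_zero]
    · have hgS : g S = insert e₀ S := by simp [hg, hmem]
      have hiff : NoBrokenCircuit M ↑(insert e₀ S) ↔ NoBrokenCircuit M ↑S := by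
        rw [Finset.coe_insert]; exact nbc_insert_bot M e₀ h₀ _
      have hcard : (insert e₀ S).card = S.card + 1 := Finset.card_insert_of_notMem hmem
      by_cases hn : NoBrokenCircuit M ↑S
      · simp only [f, hgS, if_pos hn, if_pos (hiff.mpr hn), hcard, pow_succ]
        ring
      · simp only [f, hgS, if_neg hn, if_neg (hiff.not.mpr hn), add_zero]
  have gne : ∀ S : Finset α, f S ≠ 0 → g S ≠ S := by
    intro S _
    by_cases hmem : e₀ ∈ S
    · simp only [hg, if_pos hmem]
      intro h
      have := Finset.notMem_erase e₀ S
      rw [h] at this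
      exact this hmem
    · simp only [hg, if_neg hmem]
      intro h; exact hmem (h ▸ Finset.mem_insert_self e₀ S)
  have ginv : ∀ S : Finset α, g (g S) = S := by
    intro S
    by_cases hmem : e₀ ∈ S
    · simp [hg, hmem, Finset.insert_erase hmem]
    · simp [hg, hmem, Finset.erase_insert hmem]
  exact Finset.sum_ninvolution g key gne (fun S => Finset.mem_univ _) ginv
end

section
/- Let M be a matroid on E, F a stressed flat of rank r, and k = rk(M). Let cusp(F) be the collection of k-element subsets S ⊆ E with |S ∩ F| = r + 1. Then the union of the set of bases of M with cusp(F) is the collection of bases of a matroid on E (the relaxation of M at F). -/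
open Matroid Set

/-- `F` is a stressed flat of `M` of rank `r`: `F` is a flat of rank `r`, the restriction
`M|_F` is uniform of rank `r` (a subset of `F` is independent iff it has at most `r`
elements), and the contraction `M/F` is uniform of rank `rk M − r` (the bases of `M/F`,
i.e. the sets `B₂ ⊆ E∖F` completing a basis of `F` to a basis of `M`, are exactly the
subsets of `E∖F` of size `rk M − r`). -/
def StressedFlat {α : Type*} (M : Matroid α) (F : Set α) (r : ℕ) : Prop :=
  M.IsFlat F ∧ matRank M F = r ∧
  (∀ I ⊆ F, (M.Indep I ↔ I.ncard ≤ r)) ∧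
  (∀ B₂ ⊆ M.E \ F,
    ((∃ B₁, (M ↾ F).IsBase B₁ ∧ M.IsBase (B₁ ∪ B₂)) ↔ B₂.ncard = matRank M M.E - r))

set_option maxHeartbeats 1000000 in
/-- Relaxation of a stressed flat: if `F` is a stressed flat of rank `r` in a matroid `M`
of rank `k`, then the bases of `M` together with `cusp(F)` — the `k`-element subsets `S`
with `|S ∩ F| = r + 1` — form the collection of bases of a matroid on `E`. -/
theorem stmt_10 {α : Type*} [Fintype α] (M : Matroid α) (hE : M.E = univ)
    (F : Set α) (r k : ℕ) (hk : matRank M univ = k) (hF : StressedFlat M F r) :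
    ∃ M' : Matroid α, M'.E = univ ∧
      ∀ B, M'.IsBase B ↔ (M.IsBase B ∨ (B.ncard = k ∧ (B ∩ F).ncard = r + 1)) := by
  obtain ⟨hFlat, hrF, h3, h4⟩ := hF
  obtain ⟨B₀, hB₀⟩ := M.exists_isBase
  -- every base has cardinality k
  have hbk : ∀ B, M.IsBase B → B.ncard = k := by
    intro B hB
    have hub : ∀ n ∈ {n | ∃ I, M.Indep I ∧ I ⊆ univ ∧ I.ncard = n}, n ≤ B.ncard := by
      rintro n ⟨I, hI, -, rfl⟩
      obtain ⟨B', hB', hIB'⟩ := hI.exists_isBase_superset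
      exact (ncard_le_ncard hIB' B'.toFinite).trans (hB'.ncard_eq_ncard_of_isBase hB).le
    have hmem : B.ncard ∈ {n | ∃ I, M.Indep I ∧ I ⊆ univ ∧ I.ncard = n} :=
      ⟨B, hB.indep, subset_univ _, rfl⟩
    rw [← hk]
    unfold matRank
    exact le_antisymm (le_csSup ⟨B.ncard, hub⟩ hmem) (csSup_le ⟨B.ncard, hmem⟩ hub)
  -- there is an independent subset of F of cardinality r
  have hIr : ∃ I, M.Indep I ∧ I ⊆ F ∧ I.ncard = r := by
    have hne : {n | ∃ I, M.Indep I ∧ I ⊆ F ∧ I.ncard = n}.Nonempty :=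
      ⟨0, ∅, M.empty_indep, empty_subset _, ncard_empty α⟩
    have hbdd : BddAbove {n | ∃ I, M.Indep I ∧ I ⊆ F ∧ I.ncard = n} := by
      refine ⟨(univ : Set α).ncard, ?_⟩
      rintro n ⟨I, -, -, rfl⟩
      exact ncard_le_ncard (subset_univ I) finite_univ
    rw [← hrF]
    unfold matRank
    exact Nat.sSup_mem hne hbdd
  have hkr : r ≤ k := by
    obtain ⟨I, hI, -, hIcard⟩ := hIr
    obtain ⟨B, hB, hIB⟩ := hI.exists_isBase_superset
    rw [← hIcard, ← hbk B hB]
    exact ncard_le_ncard hIB B.toFinite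
  -- closure of any r-subset of F is F
  have hclF : ∀ B₁, B₁ ⊆ F → B₁.ncard = r → M.closure B₁ = F := by
    intro B₁ hB₁F hB₁c
    have hB₁i : M.Indep B₁ := (h3 B₁ hB₁F).mpr hB₁c.le
    refine subset_antisymm ?_ ?_
    · rw [← hFlat.closure]
      exact M.closure_subset_closure hB₁F
    · intro x hx
      by_contra hxc
      have hxB₁ : x ∉ B₁ := fun h => hxc (M.subset_closure B₁ (by rw [hE]; exact subset_univ _) h)
      have : M.Indep (insert x B₁) := by
        rw [hB₁i.insert_indep_iff_of_notMem hxB₁, hE]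
        exact ⟨mem_univ x, hxc⟩
      have := (h3 _ (insert_subset hx hB₁F)).mp this
      rw [ncard_insert_of_notMem hxB₁ B₁.toFinite, hB₁c] at this
      omega
  -- key lemma: any r-subset of F together with any (k-r)-subset of Fᶜ is a base
  have hLemB : ∀ B₁ B₂ : Set α, B₁ ⊆ F → B₁.ncard = r → B₂ ⊆ univ \ F →
      B₂.ncard = k - r → M.IsBase (B₁ ∪ B₂) := by
    intro B₁ B₂ hB₁F hB₁c hB₂F hB₂c
    have hB₂E : B₂ ⊆ M.E \ F := by rw [hE]; exact hB₂F
    obtain ⟨B₁', hB₁'b, hBase⟩ := (h4 B₂ hB₂E).mpr (by rw [hE, hk]; exact hB₂c)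
    have hB₁'F : B₁' ⊆ F := hB₁'b.subset_ground
    have hsp : M.Spanning (B₁ ∪ B₂) := by
      rw [spanning_iff_closure_eq (by rw [hE]; exact subset_univ _)]
      refine subset_antisymm (M.closure_subset_ground _) ?_
      rw [← hBase.closure_eq]
      refine M.closure_subset_closure_of_subset_closure (union_subset ?_ ?_)
      · refine hB₁'F.trans ?_
        rw [← hclF B₁ hB₁F hB₁c]
        exact M.closure_subset_closure subset_union_left
      · exact subset_union_right.trans
          (M.subset_closure (B₁ ∪ B₂) (by rw [hE]; exact subset_univ _))
    obtain ⟨B, hB, hBsub⟩ := hsp.exists_isBase_subset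
    have hdisj : Disjoint B₁ B₂ := disjoint_left.mpr fun x hx1 hx2 => (hB₂F hx2).2 (hB₁F hx1)
    have hcard : (B₁ ∪ B₂).ncard = k := by
      rw [ncard_union_eq hdisj B₁.toFinite B₂.toFinite, hB₁c, hB₂c]
      omega
    have : B = B₁ ∪ B₂ :=
      eq_of_subset_of_ncard_le hBsub (by rw [hcard, hbk B hB]) (B₁ ∪ B₂).toFinite
    rwa [← this]
  -- corollary: elements outside F and outside B₂ are not in the closure of B₁ ∪ B₂
  have hNotCl : ∀ B₁ B₂ : Set α, ∀ c, B₁ ⊆ F → B₁.ncard = r → B₂ ⊆ univ \ F →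
      B₂.ncard = k - r - 1 → r + 1 ≤ k → c ∉ F → c ∉ B₂ → c ∉ M.closure (B₁ ∪ B₂) := by
    intro B₁ B₂ c hB₁F hB₁c hB₂F hB₂c hrk hcF hcB₂
    have hbase : M.IsBase (B₁ ∪ insert c B₂) := by
      refine hLemB B₁ (insert c B₂) hB₁F hB₁c (insert_subset ⟨mem_univ c, hcF⟩ hB₂F) ?_
      rw [ncard_insert_of_notMem hcB₂ B₂.toFinite, hB₂c]
      omega
    have hind : M.Indep (insert c (B₁ ∪ B₂)) := by
      have := hbase.indep
      rwa [union_insert] at this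
    have hcU : c ∉ B₁ ∪ B₂ := by
      rintro (h | h)
      exacts [hcF (hB₁F h), hcB₂ h]
    have := ((hind.subset (subset_insert _ _)).insert_indep_iff_of_notMem hcU).mp hind
    exact this.2
  -- an independent set of cardinality k is a base
  have hIndepK : ∀ I, M.Indep I → I.ncard = k → M.IsBase I := by
    intro I hI hIc
    obtain ⟨B, hB, hIB⟩ := hI.exists_isBase_superset
    have : I = B := eq_of_subset_of_ncard_le hIB (by rw [hbk B hB, hIc]) B.toFinite
    rwa [this]
  have hcapd : ∀ X : Set α, (X ∩ F).ncard + (X \ F).ncard = X.ncard := fun X =>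
    ncard_inter_add_ncard_diff_eq_ncard X F X.toFinite
  have hXcapF_le : ∀ X, M.IsBase X → (X ∩ F).ncard ≤ r := fun X hX =>
    (h3 _ inter_subset_right).mp (hX.indep.subset inter_subset_left)
  set Base' : Set α → Prop :=
    fun B => M.IsBase B ∨ (B.ncard = k ∧ (B ∩ F).ncard = r + 1) with hBase'
  have hcard' : ∀ Z, Base' Z → Z.ncard = k := fun Z h => h.elim (hbk Z) And.left
  have exch : Matroid.ExchangeProperty Base' := by
    rintro X Y hX hY a ⟨haX, haY⟩
    have hXk := hcard' X hX
    have hYk := hcard' Y hY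
    have hYXne : (Y \ X).Nonempty := by
      rw [nonempty_iff_ne_empty]
      intro h
      have : Y = X := eq_of_subset_of_ncard_le (diff_eq_empty.mp h) (by omega) X.toFinite
      exact haY (this ▸ haX)
    rcases hX with hXb | ⟨hXk', hXF⟩
    · rcases hY with hYb | ⟨hYk', hYF⟩
      · -- Case 1: both bases
        obtain ⟨b, hb, hbase⟩ := hXb.exchange hYb ⟨haX, haY⟩
        exact ⟨b, hb, Or.inl hbase⟩
      · -- Case 2: X base, Y cusp
        have hrk : r + 1 ≤ k := by
          rw [← hYF, ← hYk']
          exact ncard_le_ncard inter_subset_left Y.toFinite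
        have hXa_indep : M.Indep (X \ {a}) := hXb.indep.subset diff_subset
        have hXa1 : (X \ {a}).ncard + 1 = k := by
          rw [ncard_diff_singleton_add_one haX X.toFinite]; exact hXk
        by_cases hex : ∃ b ∈ Y \ X, M.Indep (insert b (X \ {a}))
        · obtain ⟨b, hb, hind⟩ := hex
          refine ⟨b, hb, Or.inl (hIndepK _ hind ?_)⟩
          rw [ncard_insert_of_notMem (fun h => hb.2 h.1) (X \ {a}).toFinite]
          omega
        · push_neg at hex
          have hYH : Y ⊆ M.closure (X \ {a}) := by
            intro y hy
            by_cases hyX : y ∈ X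
            · exact M.subset_closure (X \ {a}) (by rw [hE]; exact subset_univ _)
                ⟨hyX, fun h => haY (h ▸ hy)⟩
            · have hni := hex y ⟨hy, hyX⟩
              rw [hXa_indep.insert_indep_iff_of_notMem (fun h => hyX h.1), hE] at hni
              simpa using hni
          obtain ⟨B₁, hB₁YF, hB₁c⟩ := exists_subset_card_eq (show r ≤ (Y ∩ F).ncard by omega)
          have hB₁F : B₁ ⊆ F := hB₁YF.trans inter_subset_right
          have hB₁i : M.Indep B₁ := (h3 B₁ hB₁F).mpr hB₁c.le
          have hFH : F ⊆ M.closure (X \ {a}) := by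
            rw [← hclF B₁ hB₁F hB₁c]
            exact M.closure_subset_closure_of_subset_closure
              ((hB₁YF.trans inter_subset_left).trans hYH)
          have haF : a ∉ F := fun h =>
            hXb.indep.notMem_closure_diff_of_mem haX (hFH h)
          obtain ⟨B, hBbasis, hB₁B⟩ := hB₁i.subset_isBasis_of_subset
            ((hB₁YF.trans inter_subset_left).trans hYH) (M.closure_subset_ground _)
          have hXaBasis : M.IsBasis (X \ {a}) (M.closure (X \ {a})) := hXa_indep.isBasis_closure
          have hBc : B.ncard = (X \ {a}).ncard := by
            rw [ncard_def, hBbasis.encard_eq_encard hXaBasis, ← ncard_def]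
          have hBF : B ∩ F = B₁ := by
            refine (eq_of_subset_of_ncard_le (subset_inter hB₁B hB₁F) ?_ (B ∩ F).toFinite).symm
            rw [hB₁c]
            exact (h3 _ inter_subset_right).mp (hBbasis.indep.subset inter_subset_left)
          have hBdFc : (B \ F).ncard = k - r - 1 := by
            have := hcapd B
            rw [hBF, hB₁c] at this
            omega
          have hkey : ∀ c, c ∉ F → c ∉ B → c ∉ M.closure (X \ {a}) := by
            intro c hcF hcB
            have := hNotCl B₁ (B \ F) c hB₁F hB₁c (diff_subset_diff_left (subset_univ B))
              hBdFc hrk hcF (fun h => hcB h.1)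
            rwa [show B₁ ∪ B \ F = B from hBF ▸ inter_union_diff B F,
              hBbasis.closure_eq_closure, closure_closure] at this
          have hXaB : (X \ {a}) \ F ⊆ B \ F := by
            rintro x ⟨hx, hxF⟩
            refine ⟨?_, hxF⟩
            by_contra hxB
            exact hkey x hxF hxB
              (M.subset_closure (X \ {a}) (by rw [hE]; exact subset_univ _) hx)
          have hXFc : (X ∩ F).ncard = r := by
            have h1 : ((X \ {a}) \ F).ncard ≤ k - r - 1 :=
              hBdFc ▸ ncard_le_ncard hXaB (B \ F).toFinite
            have h2 : X \ F = insert a ((X \ {a}) \ F) := by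
              ext x
              have hxa : x = a → (x ∈ X ∧ x ∉ F) := fun h => h ▸ ⟨haX, haF⟩
              simp only [mem_diff, mem_insert_iff, mem_singleton_iff]
              tauto
            have h3' : (X \ F).ncard ≤ k - r := by
              rw [h2]
              have := ncard_insert_le a ((X \ {a}) \ F)
              omega
            have h4' := hcapd X
            have h5' := hXcapF_le X hXb
            omega
          have hbex : ∃ b, b ∈ Y ∩ F ∧ b ∉ X := by
            by_contra hcon
            push_neg at hcon
            have hsub : Y ∩ F ⊆ X ∩ F := fun y hy => ⟨hcon y hy, hy.2⟩
            have := ncard_le_ncard hsub (X ∩ F).toFinite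
            omega
          obtain ⟨b, hbYF, hbX⟩ := hbex
          refine ⟨b, ⟨hbYF.1, hbX⟩, Or.inr ⟨?_, ?_⟩⟩
          · rw [ncard_insert_of_notMem (fun h => hbX h.1) (X \ {a}).toFinite]
            omega
          · have hseq : insert b (X \ {a}) ∩ F = insert b (X ∩ F) := by
              ext x
              have hx1 : x = a → x ∉ F := fun h => h ▸ haF
              have hx2 : x = b → x ∈ F := fun h => h ▸ hbYF.2
              simp only [mem_inter_iff, mem_insert_iff, mem_diff, mem_singleton_iff]
              tauto
            rw [hseq, ncard_insert_of_notMem (fun h => hbX h.1) (X ∩ F).toFinite, hXFc]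
    · -- Case 3: X cusp
      have hrk : r + 1 ≤ k := by
        rw [← hXF, ← hXk']
        exact ncard_le_ncard inter_subset_left X.toFinite
      have hXdF : (X \ F).ncard = k - r - 1 := by have := hcapd X; omega
      have hXa1 : (X \ {a}).ncard + 1 = k := by
        rw [ncard_diff_singleton_add_one haX X.toFinite]; exact hXk'
      by_cases haF : a ∈ F
      · -- removed element is in F
        by_cases hbF : ∃ b ∈ Y \ X, b ∈ F
        · obtain ⟨b, ⟨hbY, hbX⟩, hbF⟩ := hbF
          refine ⟨b, ⟨hbY, hbX⟩, Or.inr ⟨?_, ?_⟩⟩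
          · rw [ncard_insert_of_notMem (fun h => hbX h.1) (X \ {a}).toFinite]
            omega
          · have hseq : insert b (X \ {a}) ∩ F = insert b ((X ∩ F) \ {a}) := by
              rw [insert_inter_of_mem hbF]
              congr 1
              ext x
              simp only [mem_inter_iff, mem_diff, mem_singleton_iff]
              tauto
            rw [hseq, ncard_insert_of_notMem (fun h => hbX h.1.1) ((X ∩ F) \ {a}).toFinite,
              ncard_diff_singleton_of_mem (mem_inter haX haF), hXF]
            omega
        · push_neg at hbF
          obtain ⟨b, hbYX⟩ := hYXne
          have hbF' := hbF b hbYX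
          refine ⟨b, hbYX, Or.inl ?_⟩
          have hseq : insert b (X \ {a}) = ((X ∩ F) \ {a}) ∪ insert b (X \ F) := by
            ext x
            have h1 : x = a → x ∈ F := fun h => h ▸ haF
            have h2 : x = b → x ∉ F := fun h => h ▸ hbF'
            simp only [mem_insert_iff, mem_diff, mem_union, mem_inter_iff, mem_singleton_iff]
            by_cases hxF : x ∈ F <;> tauto
          rw [hseq]
          refine hLemB _ _ (diff_subset.trans inter_subset_right) ?_
            (insert_subset ⟨mem_univ b, hbF'⟩ (diff_subset_diff_left (subset_univ X))) ?_
          · rw [ncard_diff_singleton_of_mem (mem_inter haX haF), hXF]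
            omega
          · rw [ncard_insert_of_notMem (fun h => hbYX.2 h.1) (X \ F).toFinite, hXdF]
            omega
      · -- removed element is not in F
        have hbex : ∃ b ∈ Y \ X, b ∉ F := by
          by_contra hcon
          push_neg at hcon
          have hYXF : Y \ F ⊆ X \ F := by
            rintro x ⟨hxY, hxF⟩
            refine ⟨?_, hxF⟩
            by_contra hxX
            exact hxF (hcon x ⟨hxY, hxX⟩)
          have hle : (Y \ F).ncard ≤ (X \ F).ncard := ncard_le_ncard hYXF (X \ F).toFinite
          rcases hY with hYb | ⟨-, hYF⟩
          · have h1 := hXcapF_le Y hYb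
            have h2 := hcapd Y
            omega
          · have h2 := hcapd Y
            have hYdF : (Y \ F).ncard = k - r - 1 := by omega
            have : Y \ F = X \ F :=
              eq_of_subset_of_ncard_le hYXF (by omega) (X \ F).toFinite
            have : a ∈ Y \ F := this ▸ ⟨haX, haF⟩
            exact haY this.1
        obtain ⟨b, hbYX, hbF⟩ := hbex
        refine ⟨b, hbYX, Or.inr ⟨?_, ?_⟩⟩
        · rw [ncard_insert_of_notMem (fun h => hbYX.2 h.1) (X \ {a}).toFinite]
          omega
        · have hseq : insert b (X \ {a}) ∩ F = X ∩ F := by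
            ext x
            have h1 : x = a → x ∉ F := fun h => h ▸ haF
            have h2 : x = b → x ∉ F := fun h => h ▸ hbF
            simp only [mem_inter_iff, mem_insert_iff, mem_diff, mem_singleton_iff]
            tauto
          rw [hseq, hXF]
  refine ⟨Matroid.ofIsBaseOfFinite finite_univ Base' ⟨B₀, Or.inl hB₀⟩ exch
    (fun B _ => subset_univ B), rfl, fun B => Iff.rfl⟩
end

section
/- Let M be a matroid on a finite set E. Then the dimension of the base polytope P(M) equals |E| minus the number of connected components of M. -/
open Matroid Set

/-- The connectivity relation on the ground set: `e ∼ f` iff `e = f` or some circuit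
contains both.  Connected components of `M` are the equivalence classes of the
equivalence relation generated by this relation, i.e. the elements of `Quot (connRel M)`. -/
def connRel {α : Type*} (M : Matroid α) (e f : α) : Prop :=
  e = f ∨ ∃ C, _root_.IsCircuit M C ∧ e ∈ C ∧ f ∈ C

section Aux

variable {α : Type*} {M : Matroid α}

lemma IsCircuit.dep' {C : Set α} (hC : _root_.IsCircuit M C) : M.Dep C :=
  dep_iff.mpr ⟨hC.2.1, hC.1⟩

lemma IsCircuit.diff_indep {C : Set α} (hC : _root_.IsCircuit M C) {e : α} (he : e ∈ C) :
    M.Indep (C \ {e}) :=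
  hC.2.2 _ (Set.sdiff_singleton_ssubset.mpr he)

lemma IsCircuit.mem_closure_diff {C : Set α} (hC : _root_.IsCircuit M C) {e : α} (he : e ∈ C) :
    e ∈ M.closure (C \ {e}) := by
  rw [(hC.diff_indep he).mem_closure_iff]
  left
  rw [Set.insert_diff_singleton, Set.insert_eq_of_mem he]
  exact hC.dep'

/-- Every finite dependent set contains a circuit. -/
lemma exists_circuit_subset {X : Set α} (hfin : X.Finite) (hX : M.Dep X) :
    ∃ C ⊆ X, _root_.IsCircuit M C := by
  obtain ⟨n, hn⟩ : ∃ n, X.ncard = n := ⟨_, rfl⟩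
  induction n using Nat.strong_induction_on generalizing X with
  | _ n ih =>
    by_cases h : ∀ D, D ⊂ X → M.Indep D
    · exact ⟨X, Subset.rfl, hX.subset_ground, hX.not_indep, h⟩
    · push_neg at h
      obtain ⟨D, hDX, hD⟩ := h
      obtain ⟨C, hCD, hC⟩ := ih D.ncard (hn ▸ Set.ncard_lt_ncard hDX hfin)
        (hfin.subset hDX.subset) (dep_iff.mpr ⟨hD, hDX.subset.trans hX.subset_ground⟩) rfl
      exact ⟨C, hCD.trans hDX.subset, hC⟩

/-- Basis exchange along a circuit. -/
lemma exch_base (hE : M.E = univ) {B C : Set α} {e f : α} (hB : M.IsBase B) (hC : _root_.IsCircuit M C)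
    (hfC : f ∈ C) (hef : e ≠ f) (heB : e ∉ B) (hfB : f ∈ B)
    (hCs : C \ {f} ⊆ insert e (B \ {f})) : M.IsBase (insert e (B \ {f})) := by
  have hind : M.Indep (B \ {f}) := hB.indep.subset diff_subset
  have hecl : e ∉ M.closure (B \ {f}) := by
    intro hecl
    have h2 : C \ {f} ⊆ M.closure (B \ {f}) := by
      intro x hx
      rcases hCs hx with rfl | hx'
      · exact hecl
      · exact M.subset_closure _ (by simp [hE]) hx'
    exact hB.indep.notMem_closure_diff_of_mem hfB
      (closure_subset_closure_of_subset_closure h2 (hC.mem_closure_diff hfC))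
  have hi : M.Indep (insert e (B \ {f})) := by
    rw [hind.insert_indep_iff_of_notMem (fun h => heB h.1)]
    exact ⟨by simp [hE], hecl⟩
  rw [Set.insert_diff_singleton_comm hef B]
  exact hB.exchange_isBase_of_indep' hfB heB (by rwa [← Set.insert_diff_singleton_comm hef])

/-- If `S` is a union of connected components, then `B ∩ S` is a basis of `S`
for every base `B`. -/
lemma inter_basis_of_separator [Fintype α] (hE : M.E = univ) {B S : Set α} (hB : M.IsBase B)
    (hS : ∀ C, _root_.IsCircuit M C → ∀ c ∈ C, ∀ d ∈ C, (c ∈ S ↔ d ∈ S)) :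
    M.IsBasis (B ∩ S) S := by
  refine (hB.indep.subset inter_subset_left).isBasis_of_forall_insert inter_subset_right ?_
  rintro x ⟨hxS, hxBS⟩
  have hxB : x ∉ B := fun h => hxBS ⟨h, hxS⟩
  obtain ⟨C, hCsub, hC⟩ :=
    exists_circuit_subset (Set.toFinite _) (hB.insert_dep ⟨by simp [hE], hxB⟩)
  have hxC : x ∈ C := by
    by_contra h
    exact hC.2.1 (hB.indep.subset fun y hy => (hCsub hy).resolve_left (fun h' => h (h' ▸ hy)))
  have hCS : C ⊆ S := fun c hc => (hS C hC c hc x hxC).mpr hxS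
  refine (hC.dep').superset (fun c hc => ?_) (by simp [hE])
  rcases hCsub hc with rfl | h
  · exact mem_insert _ _
  · exact mem_insert_of_mem _ ⟨h, hCS hc⟩

lemma inter_ncard_eq [Fintype α] (hE : M.E = univ) {B B' S : Set α} (hB : M.IsBase B)
    (hB' : M.IsBase B')
    (hS : ∀ C, _root_.IsCircuit M C → ∀ c ∈ C, ∀ d ∈ C, (c ∈ S ↔ d ∈ S)) :
    (B ∩ S).ncard = (B' ∩ S).ncard := by
  have h := (inter_basis_of_separator hE hB hS).encard_eq_encard
    (inter_basis_of_separator hE hB' hS)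
  simp [Set.ncard_def, h]

/-- The linear map sending `x : α → ℝ` to the vector of its sums over the
connected components of `M`. -/
noncomputable def Tmap {α : Type*} [Fintype α] (M : Matroid α) :
    (α → ℝ) →ₗ[ℝ] (Quot (connRel M) → ℝ) where
  toFun x q := ∑ a, ({a | Quot.mk (connRel M) a = q}).indicator x a
  map_add' x y := by
    classical
    funext q
    rw [Pi.add_apply, ← Finset.sum_add_distrib]
    refine Finset.sum_congr rfl fun a _ => ?_
    simp only [Set.indicator_apply]
    split_ifs <;> simp
  map_smul' c x := by
    classical
    funext q
    rw [RingHom.id_apply, Pi.smul_apply, Finset.smul_sum]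
    refine Finset.sum_congr rfl fun a _ => ?_
    simp only [Set.indicator_apply]
    split_ifs <;> simp

lemma Tmap_apply {α : Type*} [Fintype α] (M : Matroid α) (x : α → ℝ) (q : Quot (connRel M)) :
    Tmap M x q = ∑ a, ({a | Quot.mk (connRel M) a = q}).indicator x a := rfl

lemma Tmap_indVec {α : Type*} [Fintype α] (M : Matroid α) (B : Set α) (q : Quot (connRel M)) :
    Tmap M (indVec B) q = ((B ∩ {a | Quot.mk (connRel M) a = q}).ncard : ℝ) := by
  classical
  have h1 : Tmap M (indVec B) q
      = ∑ a, if (a ∈ B ∧ Quot.mk (connRel M) a = q) then (1 : ℝ) else 0 := by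
    rw [Tmap_apply]
    refine Finset.sum_congr rfl fun a _ => ?_
    by_cases h1 : Quot.mk (connRel M) a = q <;> by_cases h2 : a ∈ B <;>
      simp [indVec, Set.indicator_apply, h1, h2, mem_setOf_eq]
  have hset : B ∩ {a | Quot.mk (connRel M) a = q}
      = ↑(Finset.univ.filter fun a => a ∈ B ∧ Quot.mk (connRel M) a = q) := by
    ext a; simp
  rw [h1, hset, Set.ncard_coe_finset, ← Finset.sum_filter]
  simp

/-- All elements of a circuit lie in the same connected component. -/
lemma mk_eq_of_circuit {C : Set α} (hC : _root_.IsCircuit M C) {c d : α} (hc : c ∈ C) (hd : d ∈ C) :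
    Quot.mk (connRel M) c = Quot.mk (connRel M) d :=
  Quot.sound (Or.inr ⟨C, hC, hc, hd⟩)

lemma span_le_ker [Fintype α] (hE : M.E = univ) :
    vectorSpan ℝ {x | ∃ B, M.IsBase B ∧ x = indVec B} ≤ LinearMap.ker (Tmap M) := by
  rw [vectorSpan_def]
  refine Submodule.span_le.mpr ?_
  rintro v hv
  rw [Set.mem_vsub] at hv
  obtain ⟨x, ⟨B, hB, rfl⟩, y, ⟨B', hB', rfl⟩, rfl⟩ := hv
  rw [SetLike.mem_coe, LinearMap.mem_ker, vsub_eq_sub, map_sub]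
  funext q
  have hS : ∀ C, _root_.IsCircuit M C → ∀ c ∈ C, ∀ d ∈ C,
      (c ∈ {a | Quot.mk (connRel M) a = q} ↔ d ∈ {a | Quot.mk (connRel M) a = q}) := by
    intro C hC c hc d hd
    simp only [mem_setOf_eq, mk_eq_of_circuit hC hc hd]
  have : Tmap M (indVec B) q = Tmap M (indVec B') q := by
    rw [Tmap_indVec, Tmap_indVec]
    norm_cast
    exact inter_ncard_eq hE hB hB' hS
  simp [this]

lemma single_diff_mem [Fintype α] [DecidableEq α] (hE : M.E = univ) {a b : α}
    (h : Quot.mk (connRel M) a = Quot.mk (connRel M) b) :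
    Pi.single a (1:ℝ) - Pi.single b 1 ∈ vectorSpan ℝ {x | ∃ B, M.IsBase B ∧ x = indVec B} := by
  classical
  have h' := Quot.eq.mp h
  clear h
  induction h' with
  | rel x y hxy =>
    rcases hxy with rfl | ⟨C, hC, hxC, hyC⟩
    · simp
    · by_cases hxy : x = y
      · simp [hxy]
      obtain ⟨B, hB, hsub⟩ := (hC.diff_indep hyC).exists_isBase_superset
      have hxB : x ∈ B := hsub ⟨hxC, hxy⟩
      have hyB : y ∉ B := fun hyB => hC.2.1 (hB.indep.subset fun c hc => by
        by_cases h' : c = y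
        · exact h' ▸ hyB
        · exact hsub ⟨hc, h'⟩)
      have hB' : M.IsBase (insert y (B \ {x})) := by
        refine exch_base hE hB hC hxC (Ne.symm hxy) hyB hxB ?_
        rintro c ⟨hc, hcx⟩
        by_cases h' : c = y
        · exact h' ▸ mem_insert _ _
        · exact mem_insert_of_mem _ ⟨hsub ⟨hc, h'⟩, hcx⟩
      have key : indVec B - indVec (insert y (B \ {x}))
          = Pi.single x (1:ℝ) - Pi.single y 1 := by
        funext c
        rcases eq_or_ne c x with rfl | hcx
        · simp [indVec, Set.indicator_apply, hxB, hxy, Pi.single_apply, Ne.symm hxy]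
        · rcases eq_or_ne c y with rfl | hcy
          · simp [indVec, Set.indicator_apply, hyB, Pi.single_apply, hcx]
          · simp [indVec, Set.indicator_apply, Pi.single_apply, hcx, hcy]
      rw [← key, ← vsub_eq_sub]
      exact vsub_mem_vectorSpan ℝ ⟨B, hB, rfl⟩ ⟨_, hB', rfl⟩
  | refl x => simp
  | symm x y _ ih => rw [← neg_sub]; exact Submodule.neg_mem _ ih
  | trans x y z _ _ ih1 ih2 =>
      have := Submodule.add_mem _ ih1 ih2
      rwa [sub_add_sub_cancel] at this

lemma ker_le_span [Fintype α] [DecidableEq α] (hE : M.E = univ) :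
    LinearMap.ker (Tmap M) ≤ vectorSpan ℝ {x | ∃ B, M.IsBase B ∧ x = indVec B} := by
  classical
  letI : Fintype (Quot (connRel M)) := Fintype.ofFinite _
  intro x hx
  rw [LinearMap.mem_ker] at hx
  have h1 : ∑ a, x a • (Pi.single a 1 : α → ℝ) = x := by
    simp_rw [← Pi.single_smul, smul_eq_mul, mul_one, Finset.univ_sum_single]
  have h2 : ∑ a, x a • (Pi.single (Quot.mk (connRel M) a).out 1 : α → ℝ) = 0 := by
    rw [← Finset.sum_fiberwise Finset.univ (fun a => Quot.mk (connRel M) a)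
      (fun a => x a • (Pi.single (Quot.mk (connRel M) a).out 1 : α → ℝ))]
    refine Finset.sum_eq_zero fun q _ => ?_
    have hterm : ∀ a ∈ Finset.univ.filter (fun a => Quot.mk (connRel M) a = q),
        x a • (Pi.single (Quot.mk (connRel M) a).out 1 : α → ℝ)
          = x a • (Pi.single q.out 1 : α → ℝ) := by
      intro a ha
      rw [(Finset.mem_filter.mp ha).2]
    rw [Finset.sum_congr rfl hterm, ← Finset.sum_smul]
    have hz : ∑ a ∈ Finset.univ.filter (fun a => Quot.mk (connRel M) a = q), x a = 0 := by
      have h := congrFun hx q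
      rw [Tmap_apply, Pi.zero_apply] at h
      rw [Finset.sum_filter]
      have hcong : (∑ a, if Quot.mk (connRel M) a = q then x a else 0)
          = ∑ a, ({a | Quot.mk (connRel M) a = q}).indicator x a :=
        Finset.sum_congr rfl fun a _ => by simp [Set.indicator_apply, mem_setOf_eq]
      rw [hcong]
      exact h
    rw [hz, zero_smul]
  have hxeq : x = ∑ a, x a • ((Pi.single a 1 : α → ℝ)
      - (Pi.single (Quot.mk (connRel M) a).out 1 : α → ℝ)) := by
    calc x = ∑ a, x a • (Pi.single a 1 : α → ℝ)
          - ∑ a, x a • (Pi.single (Quot.mk (connRel M) a).out 1 : α → ℝ) := by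
            rw [h1, h2, sub_zero]
      _ = ∑ a, (x a • (Pi.single a 1 : α → ℝ)
          - x a • (Pi.single (Quot.mk (connRel M) a).out 1 : α → ℝ)) :=
            (Finset.sum_sub_distrib _ _).symm
      _ = _ := by simp_rw [smul_sub]
  rw [hxeq]
  exact Submodule.sum_mem _ fun a _ => Submodule.smul_mem _ _
    (single_diff_mem hE (Quot.out_eq _).symm)

end Aux

/-- The dimension of the base polytope `P(M)` (the rank of its direction space) equals
`|E|` minus the number of connected components of `M`. -/
theorem stmt_12 {α : Type*} [Fintype α] (M : Matroid α) (hE : M.E = univ) :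
    Module.finrank ℝ (vectorSpan ℝ (basePolytope M)) =
      Fintype.card α - Nat.card (Quot (connRel M)) := by
  classical
  have hfinQ : Finite (Quot (connRel M)) := Finite.of_surjective _ Quot.mk_surjective
  letI : Fintype (Quot (connRel M)) := Fintype.ofFinite _
  have hspan : vectorSpan ℝ (basePolytope M)
      = vectorSpan ℝ {x | ∃ B, M.IsBase B ∧ x = indVec B} := by
    rw [basePolytope, ← direction_affineSpan, affineSpan_convexHull, direction_affineSpan]
  have hker : vectorSpan ℝ {x | ∃ B, M.IsBase B ∧ x = indVec B} = LinearMap.ker (Tmap M) :=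
    le_antisymm (span_le_ker hE) (ker_le_span hE)
  have hsurj : Function.Surjective (Tmap M) := by
    intro y
    refine ⟨fun a => if a = (Quot.mk (connRel M) a).out then y (Quot.mk (connRel M) a) else 0, ?_⟩
    funext q
    rw [Tmap_apply]
    rw [Finset.sum_eq_single q.out]
    · simp [Set.indicator_apply, Quot.out_eq]
    · intro b _ hb
      rw [Set.indicator_apply]
      split_ifs with h1 h2
      · rw [mem_setOf_eq] at h1; rw [h1] at h2; exact absurd h2 hb
      · rfl
      · rfl
    · simp
  have hrank := LinearMap.finrank_range_add_finrank_ker (Tmap M)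
  rw [LinearMap.range_eq_top.mpr hsurj, finrank_top, Module.finrank_pi, Module.finrank_pi] at hrank
  rw [hspan, hker, Nat.card_eq_fintype_card]
  omega
end
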